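/- Convexity of entropies in s_xx: let phi : (0, ∞) → ℝ be twice continuously differentiable with 0 ≤ phi'(s) ≤ s·phi''(s) for all s > 0. Then the function (q₁, q₃) ↦ q₁ · phi( (q₁ q₃)^{−1/2} ) is convex on (0, ∞) × (0, ∞). -/

import Mathlib

/-!
Put `χ t := φ (√t)`. Since `χ' t = φ' s / (2 s)` with `s = √t`, the hypothesis `0 ≤ φ' ≤ s φ''`
says exactly that `χ` is nondecreasing and convex. Now
`q₁ φ ((q₁ q₃)^{-1/2}) = q₁ χ (q₃⁻¹ / q₁)` is the perspective `(t, y) ↦ t χ (y / t)` of `χ`,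
evaluated at `(q₁, q₃⁻¹)`. The perspective of a convex function is jointly convex, and here it is
nondecreasing in `y`, so composing with the convex map `q₃ ↦ q₃⁻¹` keeps it convex.
-/

open Set

theorem ConvexOn.perspective {E : Type*} [AddCommGroup E] [Module ℝ E] {s : Set E} {g : E → ℝ}
    (hg : ConvexOn ℝ s g) :
    ConvexOn ℝ {p : ℝ × E | 0 < p.1 ∧ p.1⁻¹ • p.2 ∈ s} (fun p => p.1 * g (p.1⁻¹ • p.2)) := by
  -- The ratio of a convex combination is a convex combination of the ratios.
  have key : ∀ ⦃x y : ℝ × E⦄, 0 < x.1 → 0 < y.1 → ∀ ⦃a b : ℝ⦄, 0 ≤ a → 0 ≤ b → a + b = 1 →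
      0 < (a • x + b • y).1 ∧ (a • x + b • y).1⁻¹ • (a • x + b • y).2 =
        (a * x.1 / (a • x + b • y).1) • (x.1⁻¹ • x.2) +
          (b * y.1 / (a • x + b • y).1) • (y.1⁻¹ • y.2) ∧
        a * x.1 / (a • x + b • y).1 + b * y.1 / (a • x + b • y).1 = 1 := by
    intro x y hx hy a b ha hb hab
    have hT : 0 < (a • x + b • y).1 := convex_Ioi (0 : ℝ) hx hy ha hb hab
    refine ⟨hT, ?_, ?_⟩
    · simp only [Prod.fst_add, Prod.snd_add, Prod.smul_fst, Prod.smul_snd, smul_eq_mul, smul_add,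
        smul_smul] at *
      congr 2 <;> field_simp
    · simp only [Prod.fst_add, Prod.smul_fst, smul_eq_mul] at *
      field_simp
  refine ⟨?_, ?_⟩
  · rintro x ⟨hx, hxs⟩ y ⟨hy, hys⟩ a b ha hb hab
    obtain ⟨hT, hcomb, hsum⟩ := key hx hy ha hb hab
    refine ⟨hT, ?_⟩
    rw [hcomb]
    exact hg.1 hxs hys (by positivity) (by positivity) hsum
  · rintro x ⟨hx, hxs⟩ y ⟨hy, hys⟩ a b ha hb hab
    obtain ⟨hT, hcomb, hsum⟩ := key hx hy ha hb hab
    set T := (a • x + b • y).1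
    calc T * g (T⁻¹ • (a • x + b • y).2)
        ≤ T * ((a * x.1 / T) • g (x.1⁻¹ • x.2) + (b * y.1 / T) • g (y.1⁻¹ • y.2)) := by
          rw [hcomb]
          exact mul_le_mul_of_nonneg_left
            (hg.2 hxs hys (by positivity) (by positivity) hsum) hT.le
      _ = a • (x.1 * g (x.1⁻¹ • x.2)) + b • (y.1 * g (y.1⁻¹ • y.2)) := by
          simp only [smul_eq_mul]
          field_simp

theorem convexOn_mul_comp_inv_mul_inv {g : ℝ → ℝ}
    (hg : ConvexOn ℝ (Ioi 0) g) (hmono : MonotoneOn g (Ioi 0)) :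
    ConvexOn ℝ (Ioi 0 ×ˢ Ioi 0) (fun p : ℝ × ℝ => p.1 * g (p.1⁻¹ * p.2⁻¹)) := by
  have hinv : ConvexOn ℝ (Ioi 0) fun x : ℝ => x⁻¹ := by
    simpa only [zpow_neg_one] using convexOn_zpow (𝕜 := ℝ) (-1)
  have hmem : ∀ ⦃x : ℝ × ℝ⦄, x ∈ Ioi 0 ×ˢ Ioi 0 →
      (x.1, x.2⁻¹) ∈ {p : ℝ × ℝ | 0 < p.1 ∧ p.1⁻¹ • p.2 ∈ Ioi 0} := fun x ⟨hx1, hx2⟩ =>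
    ⟨hx1, smul_pos (inv_pos.2 hx1) (inv_pos.2 (mem_Ioi.1 hx2))⟩
  refine ⟨(convex_Ioi 0).prod (convex_Ioi 0), ?_⟩
  rintro x hx y hy a b ha hb hab
  obtain ⟨hT, hS⟩ := ((convex_Ioi 0).prod (convex_Ioi 0)) hx hy ha hb hab
  set T := (a • x + b • y).1
  calc T * g (T⁻¹ * (a • x + b • y).2⁻¹)
      ≤ T * g (T⁻¹ * (a • x.2⁻¹ + b • y.2⁻¹)) := by
        refine mul_le_mul_of_nonneg_left (hmono ?_ ?_ ?_) hT.le
        · exact mul_pos (inv_pos.2 hT) (inv_pos.2 (mem_Ioi.1 hS))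
        · have hx' : 0 < x.2⁻¹ := inv_pos.2 hx.2
          have hy' : 0 < y.2⁻¹ := inv_pos.2 hy.2
          exact mul_pos (inv_pos.2 hT) (mem_Ioi.1 <| convex_Ioi (0 : ℝ) hx' hy' ha hb hab)
        · exact mul_le_mul_of_nonneg_left (hinv.2 hx.2 hy.2 ha hb hab) (inv_pos.2 hT).le
    _ ≤ a • (x.1 * g (x.1⁻¹ * x.2⁻¹)) + b • (y.1 * g (y.1⁻¹ * y.2⁻¹)) :=
        hg.perspective.2 (hmem hx) (hmem hy) ha hb hab

theorem monotoneOn_div_self_of_le_mul_deriv {f : ℝ → ℝ} (hf : DifferentiableOn ℝ f (Ioi 0))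
    (h : ∀ s, 0 < s → f s ≤ s * deriv f s) :
    MonotoneOn (fun s => f s / s) (Ioi 0) := by
  have hd : ∀ s ∈ Ioi (0 : ℝ), HasDerivAt (fun s => f s / s)
      ((deriv f s * s - f s * 1) / s ^ 2) s := fun s hs =>
    ((hf s hs).differentiableAt (Ioi_mem_nhds hs)).hasDerivAt.div (hasDerivAt_id s) (ne_of_gt hs)
  refine monotoneOn_of_deriv_nonneg (convex_Ioi 0) ?_ ?_ ?_
  · exact fun s hs => (hd s hs).continuousAt.continuousWithinAt
  · rw [interior_Ioi]; exact fun s hs => (hd s hs).differentiableAt.differentiableWithinAt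
  · rw [interior_Ioi]
    intro s hs
    rw [(hd s hs).deriv]
    exact div_nonneg (by linarith [h s hs]) (sq_nonneg s)

theorem convexOn_comp_sqrt_of_monotoneOn_deriv_div {φ : ℝ → ℝ}
    (hφ : DifferentiableOn ℝ φ (Ioi 0))
    (hmono : MonotoneOn (fun s => deriv φ s / s) (Ioi 0)) :
    ConvexOn ℝ (Ioi 0) (fun t => φ (√t)) := by
  have hd : ∀ t ∈ Ioi (0 : ℝ), HasDerivAt (fun t => φ (√t)) (deriv φ √t / √t / 2) t := by
    intro t ht
    have hs : 0 < √t := Real.sqrt_pos.2 ht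
    exact (((hφ _ hs).differentiableAt (Ioi_mem_nhds hs)).hasDerivAt.comp t
      (Real.hasDerivAt_sqrt (ne_of_gt ht))).congr_deriv (by ring)
  refine MonotoneOn.convexOn_of_deriv (convex_Ioi 0) ?_ ?_ ?_
  · exact fun t ht => (hd t ht).continuousAt.continuousWithinAt
  · rw [interior_Ioi]; exact fun t ht => (hd t ht).differentiableAt.differentiableWithinAt
  · rw [interior_Ioi]
    intro t ht u hu htu
    rw [(hd t ht).deriv, (hd u hu).deriv]
    exact div_le_div_of_nonneg_right
      (hmono (Real.sqrt_pos.2 ht) (Real.sqrt_pos.2 hu) (Real.sqrt_le_sqrt htu)) zero_le_two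

/-- Convexity of entropies in `s_xx`: if `0 ≤ φ' ≤ s φ''` on `(0, ∞)` then
`(q₁, q₃) ↦ q₁ φ((q₁ q₃)^{-1/2})` is convex on `(0, ∞) × (0, ∞)`. -/
theorem entropy_sxx_convex
    (phi : ℝ → ℝ) (hphi : ContDiffOn ℝ 2 phi (Set.Ioi 0))
    (hcond : ∀ s : ℝ, 0 < s → 0 ≤ deriv phi s ∧ deriv phi s ≤ s * deriv (deriv phi) s) :
    ConvexOn ℝ (Set.Ioi (0 : ℝ) ×ˢ Set.Ioi (0 : ℝ))
      (fun p : ℝ × ℝ => p.1 * phi ((p.1 * p.2) ^ (-(1 / 2) : ℝ))) := by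
  have hd1 : DifferentiableOn ℝ phi (Ioi 0) := hphi.differentiableOn two_ne_zero
  have hd2 : DifferentiableOn ℝ (deriv phi) (Ioi 0) :=
    (hphi.deriv_of_isOpen (m := 1) isOpen_Ioi (by norm_num)).differentiableOn one_ne_zero
  have hmono : MonotoneOn (fun t => phi √t) (Ioi 0) :=
    (monotoneOn_of_deriv_nonneg (convex_Ioi 0) hd1.continuousOn (by rwa [interior_Ioi])
      (by rw [interior_Ioi]; exact fun s hs => (hcond s hs).1)).comp
      (Real.sqrt_monotone.monotoneOn _) (fun _ ht => Real.sqrt_pos.2 ht)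
  have hconv : ConvexOn ℝ (Ioi 0) (fun t => phi √t) :=
    convexOn_comp_sqrt_of_monotoneOn_deriv_div hd1
      (monotoneOn_div_self_of_le_mul_deriv hd2 fun s hs => (hcond s hs).2)
  refine (convexOn_mul_comp_inv_mul_inv hconv hmono).congr fun p ⟨hp1, hp2⟩ => ?_
  dsimp only
  rw [← mul_inv, Real.sqrt_inv, Real.sqrt_eq_rpow, Real.rpow_neg (mul_pos hp1 hp2).le]
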